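/- Let T and T' be unrooted binary phylogenetic trees on X to which none of Reductions 1–7 can be applied. If T and T' have a common 3-chain C = (b,c,d) that is pendant in T', then C is not pendant in T. -/

import Mathlib

/-!  Basic formalization of unrooted binary phylogenetic trees, chains, cherries,
agreement forests, TBR distance, reduction rules 1-10, phylogenetic networks,
generators (encoded via their sides inside the network), and breakpoint sides. -/

structure PhyloTree (X : Type) : Type 1 where
  V : Type
  graph : SimpleGraph V
  finV : Finite V
  isTree : graph.IsTree
  leaf : X → V
  leaf_inj : Function.Injective leaf
  deg_leaf : ∀ x : X, (graph.neighborSet (leaf x)).ncard = 1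
  deg_internal : ∀ v : V, v ∉ Set.range leaf → (graph.neighborSet v).ncard = 3

namespace PhyloTree

variable {X : Type}

/-- The unique neighbour `p_x` of the leaf labelled `x`. -/
noncomputable def parent (T : PhyloTree X) (x : X) : T.V :=
  (Set.ncard_eq_one.mp (T.deg_leaf x)).choose

/-- `{a,b}` is a cherry: two distinct leaves with a common neighbour. -/
def cherry (T : PhyloTree X) (a b : X) : Prop :=
  a ≠ b ∧ T.parent a = T.parent b

/-- `l = (l₁,…,lₙ)` is an `n`-chain of `T` (n = l.length ≥ 2): the parents form a
walk (consecutive parents equal or adjacent) whose interior parents are pairwise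
distinct. -/
def isChain (T : PhyloTree X) (l : List X) : Prop :=
  2 ≤ l.length ∧ l.Nodup ∧
  (∀ (i : ℕ) (x y : X), l[i]? = some x → l[i + 1]? = some y →
    T.parent x = T.parent y ∨ T.graph.Adj (T.parent x) (T.parent y)) ∧
  (∀ (i j : ℕ) (x y : X), 1 ≤ i → i < j → j + 1 < l.length →
    l[i]? = some x → l[j]? = some y → T.parent x ≠ T.parent y)

def frontPendant (T : PhyloTree X) (l : List X) : Prop :=
  ∃ x y : X, l[0]? = some x ∧ l[1]? = some y ∧ T.parent x = T.parent y

/-- A chain is pendant if its first two or last two members have equal parents. -/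
def pendantChain (T : PhyloTree X) (l : List X) : Prop :=
  T.isChain l ∧ (T.frontPendant l ∨ T.frontPendant l.reverse)

/-- Vertices of the embedding `T[B]`: all vertices on paths between leaves of `B`. -/
def embVerts (T : PhyloTree X) (B : Set X) : Set T.V :=
  {v | ∃ a ∈ B, ∃ b ∈ B, ∃ p : T.graph.Walk (T.leaf a) (T.leaf b), p.IsPath ∧ v ∈ p.support}

/-- Edges of the embedding `T[B]` (the edges "used by" `T[B]`). -/
def embEdges (T : PhyloTree X) (B : Set X) : Set (Sym2 T.V) :=
  {e | ∃ a ∈ B, ∃ b ∈ B, ∃ p : T.graph.Walk (T.leaf a) (T.leaf b), p.IsPath ∧ e ∈ p.edges}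

/-- The quartet `ab|cd` is displayed by `T`. -/
def quartet (T : PhyloTree X) (a b c d : X) : Prop :=
  Disjoint (T.embVerts {a, b}) (T.embVerts {c, d})

/-- `Y` is the leaf set of a pendant subtree of `T`: deleting a single edge
detaches exactly the leaves of `Y`. -/
def pendantSet (T : PhyloTree X) (Y : Set X) : Prop :=
  ∃ v w : T.V, T.graph.Adj v w ∧
    Y = {x : X | (T.graph.deleteEdges {s(v, w)}).Reachable (T.leaf x) v}

end PhyloTree

/-- The restrictions `T|B` and `T'|B` coincide (expressed via quartets, which
determine binary trees). -/
def restrictEqOn {X : Type} (T T' : PhyloTree X) (B : Set X) : Prop :=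
  ∀ a ∈ B, ∀ b ∈ B, ∀ c ∈ B, ∀ d ∈ B, Function.Injective ![a, b, c, d] →
    (T.quartet a b c d ↔ T'.quartet a b c d)

/-- `T` and `T'` are the same phylogenetic tree (equal up to label-preserving
isomorphism). -/
def PhyloTree.equivT {X : Type} (T T' : PhyloTree X) : Prop :=
  restrictEqOn T T' Set.univ

/-- `T'` is obtainable from `T` by a single TBR operation: there is a bipartition
of `X` which is an edge split of both trees and on both of whose parts the two
trees agree. -/
def TBRStep {X : Type} (T T' : PhyloTree X) : Prop :=
  ∃ A : Set X, A.Nonempty ∧ Aᶜ.Nonempty ∧ T.pendantSet A ∧ T'.pendantSet A ∧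
    restrictEqOn T T' A ∧ restrictEqOn T T' Aᶜ

/-- The TBR distance: the minimum number of TBR operations transforming `T` into `T'`. -/
noncomputable def dTBR {X : Type} (T T' : PhyloTree X) : ℕ :=
  sInf {k : ℕ | ∃ f : ℕ → PhyloTree X, (f 0).equivT T ∧ (f k).equivT T' ∧
    ∀ i : ℕ, i < k → TBRStep (f i) (f (i + 1))}

/-- `F` is an agreement forest for `T` and `T'`. -/
def AgreementForest {X : Type} (T T' : PhyloTree X) (F : Set (Set X)) : Prop :=
  (∀ B ∈ F, B.Nonempty) ∧ (∀ x : X, ∃ B ∈ F, x ∈ B) ∧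
  (∀ B ∈ F, ∀ B' ∈ F, B ≠ B' → Disjoint B B') ∧
  (∀ B ∈ F, restrictEqOn T T' B) ∧
  (∀ B ∈ F, ∀ B' ∈ F, B ≠ B' → Disjoint (T.embVerts B) (T.embVerts B')) ∧
  (∀ B ∈ F, ∀ B' ∈ F, B ≠ B' → Disjoint (T'.embVerts B) (T'.embVerts B'))

/-- `F` is a maximum agreement forest (minimum number of components). -/
def IsMAF {X : Type} (T T' : PhyloTree X) (F : Set (Set X)) : Prop :=
  AgreementForest T T' F ∧
  ∀ F' : Set (Set X), AgreementForest T T' F' → F.ncard ≤ F'.ncard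

/-- `Y` is preserved in the forest `F`. -/
def preservedIn {X : Type} (F : Set (Set X)) (Y : Set X) : Prop :=
  ∃ B ∈ F, Y ⊆ B

/-- `l` is a common chain of `T` and `T'`. -/
def commonChain {X : Type} (T T' : PhyloTree X) (l : List X) : Prop :=
  T.isChain l ∧ T'.isChain l

/-- A CPT-eligible common chain exists: a common `n`-chain with `n ≥ 3`, or a
common 2-chain pendant in at least one tree. -/
def CPTEligibleChain {X : Type} (T T' : PhyloTree X) : Prop :=
  (∃ l : List X, 3 ≤ l.length ∧ commonChain T T' l) ∨
  (∃ a b : X, commonChain T T' [a, b] ∧ (T.cherry a b ∨ T'.cherry a b))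

/-! ### Applicability of Reductions 1–7 -/

def Red1App {X : Type} (T T' : PhyloTree X) : Prop :=
  ∃ Y : Set X, 2 ≤ Y.ncard ∧ T.pendantSet Y ∧ T'.pendantSet Y ∧ restrictEqOn T T' Y

def Red2App {X : Type} (T T' : PhyloTree X) : Prop :=
  ∃ l : List X, 4 ≤ l.length ∧ commonChain T T' l

def Red3App {X : Type} (T T' : PhyloTree X) : Prop :=
  ∃ a b c : X, commonChain T T' [a, b, c] ∧ T.cherry a b ∧ T'.cherry b c

def Red4App {X : Type} (T T' : PhyloTree X) : Prop :=
  ∃ a b c x : X, commonChain T T' [a, b, c] ∧ T.cherry b c ∧ T'.cherry c x ∧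
    x ≠ a ∧ x ≠ b ∧ x ≠ c

def Red5App {X : Type} (T T' : PhyloTree X) : Prop :=
  ∃ a b c d x : X, commonChain T T' [a, b] ∧ commonChain T T' [c, d] ∧
    T.cherry b x ∧ T.cherry c d ∧ T'.cherry a b ∧ T'.cherry d x ∧
    x ≠ a ∧ x ≠ b ∧ x ≠ c ∧ x ≠ d

def Red6App {X : Type} (T T' : PhyloTree X) : Prop :=
  ∃ a b c d e f : X, commonChain T T' [a, b, c] ∧ commonChain T T' [d, e, f] ∧
    T.cherry b c ∧ T.cherry d e ∧ T'.isChain [a, b, c, d, e, f]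

def Red7App {X : Type} (T T' : PhyloTree X) : Prop :=
  ∃ a b c d e : X, commonChain T T' [a, b, c] ∧ commonChain T T' [d, e] ∧
    T.cherry b c ∧ T.cherry d e ∧ T'.isChain [a, b, c, d, e]

/-- The pair (T,T') cannot be reduced by any of Reductions 1–7 (in either orientation). -/
def Irred7 {X : Type} (T T' : PhyloTree X) : Prop :=
  ¬ Red1App T T' ∧ ¬ Red2App T T' ∧
  ¬ Red3App T T' ∧ ¬ Red3App T' T ∧
  ¬ Red4App T T' ∧ ¬ Red4App T' T ∧
  ¬ Red5App T T' ∧ ¬ Red5App T' T ∧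
  ¬ Red6App T T' ∧ ¬ Red6App T' T ∧
  ¬ Red7App T T' ∧ ¬ Red7App T' T

/-! ### Reduction 8 -/

/-- The configuration needed for Reduction 8A: leaf-disjoint common 3-chains
`C=(b,c,d)` and `D=(e,f,g)`, `C` pendant in `T'` with cherry `{b,c}`, `C` not
pendant in `T`, and `(a,b,c,d)` a chain of `T` but not of `T'`. -/
def Red8AData {X : Type} (T T' : PhyloTree X) (a b c d e f g : X) : Prop :=
  commonChain T T' [b, c, d] ∧ commonChain T T' [e, f, g] ∧
  Disjoint ({b, c, d} : Set X) ({e, f, g} : Set X) ∧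
  T'.cherry b c ∧ ¬ T.pendantChain [b, c, d] ∧
  T.isChain [a, b, c, d] ∧ ¬ T'.isChain [a, b, c, d]

def Red8App {X : Type} (T T' : PhyloTree X) : Prop :=
  ∃ a b c d e f g : X, Red8AData T T' a b c d e f g ∨ Red8AData T' T a b c d e f g

def Irred8 {X : Type} (T T' : PhyloTree X) : Prop :=
  Irred7 T T' ∧ ¬ Red8App T T'

/-! ### Operation P, Reductions 9 and 10 -/

def eligiblePOriented {X : Type} (T T' : PhyloTree X) (a b c d : X) : Prop :=
  T.isChain [a, b, c, d] ∧ ¬ T.pendantChain [a, b, c, d] ∧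
  T'.cherry a b ∧ T'.cherry c d ∧
  ∃ F : Set (Set X), IsMAF T T' F ∧ preservedIn F {a, b} ∧ preservedIn F {c, d} ∧
    ¬ preservedIn F {a, b, c, d}

/-- `{a,b,c,d}` is eligible for Operation P (after possibly swapping T and T'). -/
def eligibleP {X : Type} (T T' : PhyloTree X) (a b c d : X) : Prop :=
  eligiblePOriented T T' a b c d ∨ eligiblePOriented T' T a b c d

/-- Result of Operation P applied to `{a,b,c,d}` (with chain in `T`, cherries in `T'`). -/
def OpPResult {X : Type} (T T' : PhyloTree X) (a b c d : X) (S S' : PhyloTree X) : Prop :=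
  eligiblePOriented T T' a b c d ∧
  S.equivT T ∧
  (∀ p q r t : X, p ≠ b → q ≠ b → r ≠ b → t ≠ b → Function.Injective ![p, q, r, t] →
    (S'.quartet p q r t ↔ T'.quartet p q r t)) ∧
  S'.cherry b c

def Red91App {X : Type} (T T' : PhyloTree X) : Prop :=
  ∃ a b c d a' b' c' d' : X,
    commonChain T T' [b, c, d] ∧ T'.cherry b c ∧ ¬ T.pendantChain [b, c, d] ∧
    T.isChain [a, b, c, d] ∧ ¬ T'.isChain [a, b, c, d] ∧
    Disjoint ({a, b, c, d} : Set X) ({a', b', c', d'} : Set X) ∧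
    eligibleP T T' a' b' c' d'

def Red92App {X : Type} (T T' : PhyloTree X) : Prop :=
  ∃ a b c d a' b' c' d' : X,
    Disjoint ({a, b, c, d} : Set X) ({a', b', c', d'} : Set X) ∧
    eligibleP T T' a b c d ∧ eligibleP T T' a' b' c' d'

def Red9App {X : Type} (T T' : PhyloTree X) : Prop :=
  Red91App T T' ∨ Red91App T' T ∨ Red92App T T'

def Irred9 {X : Type} (T T' : PhyloTree X) : Prop :=
  Irred8 T T' ∧ ¬ Red9App T T'

def eligibleR10Oriented {X : Type} (T T' : PhyloTree X) (a b c d : X) : Prop :=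
  T.cherry a b ∧ T.cherry c d ∧ T'.isChain [a, b, c] ∧ T'.cherry b c ∧
  d ≠ a ∧ d ≠ b ∧ d ≠ c ∧
  ∃ F : Set (Set X), IsMAF T T' F ∧ ({c} : Set X) ∈ F

/-- `{a,b,c,d}` is eligible for Reduction 10 (after possibly swapping T and T'). -/
def eligibleR10 {X : Type} (T T' : PhyloTree X) (a b c d : X) : Prop :=
  eligibleR10Oriented T T' a b c d ∨ eligibleR10Oriented T' T a b c d

def Red10App {X : Type} (T T' : PhyloTree X) : Prop :=
  ∃ a b c d : X, eligibleR10 T T' a b c d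

def Irred10 {X : Type} (T T' : PhyloTree X) : Prop :=
  Irred9 T T' ∧ ¬ Red10App T T'

/-! ### Restrictions and Reduction results across taxon sets -/

/-- `S` is (equal to) the restriction `T|X'` of `T` to `X' ⊆ X`. -/
def IsRestrictionOf {X : Type} (T : PhyloTree X) (X' : Set X) (S : PhyloTree ↥X') : Prop :=
  ∀ a b c d : ↥X', Function.Injective ![a, b, c, d] →
    (S.quartet a b c d ↔ T.quartet a.1 b.1 c.1 d.1)

/-- `S` is obtained from `T` by replacing the pendant subtree on leaf set `Y`
by a single new leaf (Reduction 1 applied to `Y`). -/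
def ReplacedBy {X : Type} (T : PhyloTree X) (Y : Set X)
    (S : PhyloTree (↥(Yᶜ) ⊕ Unit)) : Prop :=
  ∃ y ∈ Y, ∀ a b c d : ↥(Yᶜ) ⊕ Unit, Function.Injective ![a, b, c, d] →
    (S.quartet a b c d ↔
      T.quartet (Sum.elim Subtype.val (fun _ => y) a) (Sum.elim Subtype.val (fun _ => y) b)
        (Sum.elim Subtype.val (fun _ => y) c) (Sum.elim Subtype.val (fun _ => y) d))

/-- `(a,b,c,d)` is an interrupted 4-chain of `T` and `T'` with interrupter `{u,v}`:
it is a chain of `T` and in `T'` there is a walk `p_a,p_b,v,p_c,p_d` with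
`p_b, v, p_c` pairwise distinct; `u` is the neighbour of `v` off the walk. -/
def Interrupted4 {X : Type} (T T' : PhyloTree X) (a b c d : X) (u v : T'.V) : Prop :=
  T.isChain [a, b, c, d] ∧
  (T'.parent a = T'.parent b ∨ T'.graph.Adj (T'.parent a) (T'.parent b)) ∧
  T'.graph.Adj (T'.parent b) v ∧ T'.graph.Adj v (T'.parent c) ∧
  (T'.parent c = T'.parent d ∨ T'.graph.Adj (T'.parent c) (T'.parent d)) ∧
  v ≠ T'.parent b ∧ v ≠ T'.parent c ∧ T'.parent b ≠ T'.parent c ∧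
  T'.graph.Adj u v ∧ u ≠ T'.parent b ∧ u ≠ T'.parent c

/-- The pair `(Tr, Tr')` (on `X ⊕ Unit`, the extra label being the new taxon `g'`)
is a result of applying Reduction 8A to `T, T'` with data `a,b,c,d,e,f,g`. -/
def Red8AResult {X : Type} (T T' : PhyloTree X) (a b c d e f g : X)
    (Tr Tr' : PhyloTree (X ⊕ Unit)) : Prop :=
  Red8AData T T' a b c d e f g ∧
  -- `Tr'` is `T'` with the chain `(e,f,g)` extended to `(e,f,g,g')`:
  (∀ p q r t : X, Function.Injective ![p, q, r, t] →
    (Tr'.quartet (Sum.inl p) (Sum.inl q) (Sum.inl r) (Sum.inl t) ↔ T'.quartet p q r t)) ∧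
  Tr'.isChain [Sum.inl e, Sum.inl f, Sum.inl g, Sum.inr ()] ∧
  -- `Tr` is obtained from `T` by moving the component `A` containing `b,c,d`
  -- (cut off at the edge `{p_a,p_b}`) onto a subdivision of the edge `{p_f,p_g}`
  -- of the chain `(e,f,g,g')`:
  ∃ A : Set X,
    A = {x : X | (T.graph.deleteEdges {s(T.parent a, T.parent b)}).Reachable
          (T.leaf x) (T.parent b)} ∧
    (∀ p ∈ A, ∀ q ∈ A, ∀ r ∈ A, ∀ t ∈ A, Function.Injective ![p, q, r, t] →
      (Tr.quartet (Sum.inl p) (Sum.inl q) (Sum.inl r) (Sum.inl t) ↔ T.quartet p q r t)) ∧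
    (∀ p ∈ Aᶜ, ∀ q ∈ Aᶜ, ∀ r ∈ Aᶜ, ∀ t ∈ Aᶜ, Function.Injective ![p, q, r, t] →
      (Tr.quartet (Sum.inl p) (Sum.inl q) (Sum.inl r) (Sum.inl t) ↔ T.quartet p q r t)) ∧
    Tr.pendantChain [Sum.inl b, Sum.inl c, Sum.inl d] ∧
    ∃ u v : Tr.V,
      Interrupted4 Tr' Tr (Sum.inl e) (Sum.inl f) (Sum.inl g) (Sum.inr ()) u v ∧
      {z : X ⊕ Unit | (Tr.graph.deleteEdges {s(u, v)}).Reachable (Tr.leaf z) u}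
        = Sum.inl '' A

/-! ### Phylogenetic networks, display, generators and sides -/

structure PhyloNetwork (X : Type) : Type 1 where
  V : Type
  graph : SimpleGraph V
  finV : Finite V
  conn : graph.Connected
  leaf : X → V
  leaf_inj : Function.Injective leaf
  deg_leaf : ∀ x : X, (graph.neighborSet (leaf x)).ncard = 1
  deg_internal : ∀ v : V, v ∉ Set.range leaf → (graph.neighborSet v).ncard = 3

namespace PhyloNetwork

variable {X : Type}

/-- The reticulation number `r(N) = |E| - (|V| - 1)`. -/
noncomputable def retic (N : PhyloNetwork X) : ℕ :=
  N.graph.edgeSet.ncard - (Nat.card N.V - 1)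

noncomputable def parent (N : PhyloNetwork X) (x : X) : N.V :=
  (Set.ncard_eq_one.mp (N.deg_leaf x)).choose

end PhyloNetwork

/-- An image of the tree `T` in the network `N`: a subdivision of `T` inside `N`. -/
structure TreeImage {X : Type} (T : PhyloTree X) (N : PhyloNetwork X) : Type where
  emb : T.V → N.V
  inj : Function.Injective emb
  leaf_map : ∀ x : X, emb (T.leaf x) = N.leaf x
  walk : ∀ ⦃u v : T.V⦄, T.graph.Adj u v → N.graph.Walk (emb u) (emb v)
  walk_isPath : ∀ ⦃u v : T.V⦄ (h : T.graph.Adj u v), (walk h).IsPath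
  walk_symm : ∀ ⦃u v : T.V⦄ (h : T.graph.Adj u v), walk h.symm = (walk h).reverse
  internally_disjoint : ∀ ⦃u v : T.V⦄ (h : T.graph.Adj u v) ⦃u' v' : T.V⦄
    (h' : T.graph.Adj u' v'), s(u, v) ≠ s(u', v') → ∀ z : N.V,
      z ∈ (walk h).support → z ∈ (walk h').support → z = emb u' ∨ z = emb v'

/-- `N` displays `T`. -/
def Displays {X : Type} (N : PhyloNetwork X) (T : PhyloTree X) : Prop :=
  Nonempty (TreeImage T N)

def TreeImage.edges {X : Type} {T : PhyloTree X} {N : PhyloNetwork X}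
    (I : TreeImage T N) : Set (Sym2 N.V) :=
  {e | ∃ (u v : T.V) (h : T.graph.Adj u v), e ∈ (I.walk h).edges}

/-- A spanning tree of `N` (given by its edge set `R`) obtained by greedily
extending an image of `T`. -/
structure SpanExt {X : Type} (T : PhyloTree X) (N : PhyloNetwork X) : Type where
  img : TreeImage T N
  R : Set (Sym2 N.V)
  sub : R ⊆ N.graph.edgeSet
  extends_img : img.edges ⊆ R
  isTree : (SimpleGraph.fromEdgeSet R).IsTree

/-- A vertex of `N` which is a vertex of the underlying generator: an internal
vertex not adjacent to any leaf. -/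
def genVertex {X : Type} (N : PhyloNetwork X) (v : N.V) : Prop :=
  v ∉ Set.range N.leaf ∧ ∀ x : X, ¬ N.graph.Adj v (N.leaf x)

/-- A side of the generator underlying `N`, encoded by its associated path
`P_S` in `N`: a walk between generator vertices all of whose internal vertices
are parents of leaves. -/
structure NSide {X : Type} (N : PhyloNetwork X) : Type where
  u : N.V
  w : N.V
  walk : N.graph.Walk u w
  len_pos : 0 < walk.length
  gu : genVertex N u
  gw : genVertex N w
  internal : ∀ v ∈ walk.support, v ≠ u → v ≠ w → ¬ genVertex N v ∧ v ∉ Set.range N.leaf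
  nodup : walk.support.tail.Nodup
  no_return : u = w ∨ u ∉ walk.support.tail

namespace NSide

variable {X : Type} {N : PhyloNetwork X}

/-- The taxa attached to (decorating) the side. -/
def taxa (S : NSide N) : Set X :=
  {x : X | ∃ v ∈ S.walk.support, N.graph.Adj v (N.leaf x)}

def edgeSet (S : NSide N) : Set (Sym2 N.V) := {e | e ∈ S.walk.edges}

def incident (S : NSide N) (v : N.V) : Prop := S.u = v ∨ S.w = v

def isLoop (S : NSide N) : Prop := S.u = S.w

def sameEnds (S S' : NSide N) : Prop := ({S.u, S.w} : Set N.V) = {S'.u, S'.w}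

/-- The side is a simple edge of the generator: not a loop, and no other
(parallel) side has the same endpoints. -/
def isSimple (S : NSide N) : Prop :=
  S.u ≠ S.w ∧ ∀ S' : NSide N, S.sameEnds S' → S'.edgeSet = S.edgeSet

end NSide

/-- The spanning tree with edge set `R` omits some edge of the side (has a
breakpoint on the side). -/
def omitsOn {X : Type} {N : PhyloNetwork X} (R : Set (Sym2 N.V)) (S : NSide N) : Prop :=
  ∃ e ∈ S.walk.edges, e ∉ R

def coversSide {X : Type} {N : PhyloNetwork X} (R : Set (Sym2 N.V)) (S : NSide N) : Prop :=
  ∀ e ∈ S.walk.edges, e ∈ R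

def omitsOnly {X : Type} {N : PhyloNetwork X} (R : Set (Sym2 N.V)) (S : NSide N)
    (e₀ : Sym2 N.V) : Prop :=
  e₀ ∉ R ∧ ∀ e ∈ S.walk.edges, e ≠ e₀ → e ∈ R

/-- `S` is a `1|3` side `a|bcd` relative to the spanning trees `R, R'`. -/
def Side13 {X : Type} {N : PhyloNetwork X} (R R' : Set (Sym2 N.V)) (S : NSide N)
    (a b c d : X) : Prop :=
  S.walk.support = [S.u, N.parent a, N.parent b, N.parent c, N.parent d, S.w] ∧
  ((omitsOnly R S s(N.parent a, N.parent b) ∧ coversSide R' S) ∨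
   (omitsOnly R' S s(N.parent a, N.parent b) ∧ coversSide R S))

/-- `S` is a `2|2` side `ab|cd` relative to the spanning trees `R, R'`. -/
def Side22 {X : Type} {N : PhyloNetwork X} (R R' : Set (Sym2 N.V)) (S : NSide N)
    (a b c d : X) : Prop :=
  S.walk.support = [S.u, N.parent a, N.parent b, N.parent c, N.parent d, S.w] ∧
  ((omitsOnly R S s(N.parent b, N.parent c) ∧ coversSide R' S) ∨
   (omitsOnly R' S s(N.parent b, N.parent c) ∧ coversSide R S))

/-- `S` is a `2|1|1` side `ab|c|d` relative to the spanning trees `R, R'`. -/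
def Side211 {X : Type} {N : PhyloNetwork X} (R R' : Set (Sym2 N.V)) (S : NSide N)
    (a b c d : X) : Prop :=
  S.walk.support = [S.u, N.parent a, N.parent b, N.parent c, N.parent d, S.w] ∧
  ((omitsOnly R S s(N.parent b, N.parent c) ∧ omitsOnly R' S s(N.parent c, N.parent d)) ∨
   (omitsOnly R' S s(N.parent b, N.parent c) ∧ omitsOnly R S s(N.parent c, N.parent d)))

/-- `S` is a `1|1|1` side relative to the spanning trees `R, R'`. -/
def Side111 {X : Type} {N : PhyloNetwork X} (R R' : Set (Sym2 N.V)) (S : NSide N) : Prop :=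
  ∃ a b c : X,
    S.walk.support = [S.u, N.parent a, N.parent b, N.parent c, S.w] ∧
    ((omitsOnly R S s(N.parent a, N.parent b) ∧ omitsOnly R' S s(N.parent b, N.parent c)) ∨
     (omitsOnly R' S s(N.parent a, N.parent b) ∧ omitsOnly R S s(N.parent b, N.parent c)))


section AuxPendancy

variable {X : Type}

lemma leaf_nbr (T : PhyloTree X) (x : X) :
    T.graph.neighborSet (T.leaf x) = {T.parent x} :=
  (Set.ncard_eq_one.mp (T.deg_leaf x)).choose_spec

lemma adj_leaf_parent (T : PhyloTree X) (x : X) :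
    T.graph.Adj (T.leaf x) (T.parent x) := by
  have h : T.parent x ∈ T.graph.neighborSet (T.leaf x) := by
    rw [leaf_nbr]; exact Set.mem_singleton _
  exact h

lemma cherry_pendantSet (T : PhyloTree X) {b c : X} (h : T.cherry b c) :
    T.pendantSet {b, c} := by
  classical
  obtain ⟨hbc, hpp⟩ := h
  haveI := T.finV
  have hlb : T.graph.Adj (T.leaf b) (T.parent b) := adj_leaf_parent T b
  have hlc : T.graph.Adj (T.leaf c) (T.parent b) := by
    have := adj_leaf_parent T c; rwa [← hpp] at this
  have hne_bc : T.leaf b ≠ T.leaf c := fun h => hbc (T.leaf_inj h)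
  have hnl : T.parent b ∉ Set.range T.leaf := by
    rintro ⟨y, hy⟩
    have h1 : T.leaf b ∈ T.graph.neighborSet (T.leaf y) := by rw [hy]; exact hlb.symm
    have h2 : T.leaf c ∈ T.graph.neighborSet (T.leaf y) := by rw [hy]; exact hlc.symm
    rw [leaf_nbr, Set.mem_singleton_iff] at h1 h2
    exact hne_bc (h1.trans h2.symm)
  have hdeg : (T.graph.neighborSet (T.parent b)).ncard = 3 := T.deg_internal _ hnl
  have hns : ¬ (T.graph.neighborSet (T.parent b) ⊆ {T.leaf b, T.leaf c}) := by
    intro hs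
    have h1 := Set.ncard_le_ncard hs (Set.toFinite _)
    rw [hdeg, Set.ncard_pair hne_bc] at h1
    omega
  obtain ⟨w, hw, hwn⟩ := Set.not_subset.mp hns
  simp only [Set.mem_insert_iff, Set.mem_singleton_iff, not_or] at hwn
  obtain ⟨hwb, hwc⟩ := hwn
  have hsub : T.graph.neighborSet (T.parent b) ⊆ {T.leaf b, T.leaf c, w} := by
    intro z hz
    by_contra hzn
    simp only [Set.mem_insert_iff, Set.mem_singleton_iff, not_or] at hzn
    have hq : ({z, T.leaf b, T.leaf c, w} : Set T.V) ⊆ T.graph.neighborSet (T.parent b) := by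
      intro t ht
      simp only [Set.mem_insert_iff, Set.mem_singleton_iff] at ht
      rcases ht with rfl | rfl | rfl | rfl
      · exact hz
      · exact hlb.symm
      · exact hlc.symm
      · exact hw
    have hcard : ({z, T.leaf b, T.leaf c, w} : Set T.V).ncard = 4 := by
      rw [Set.ncard_insert_of_notMem (by simp [hzn.1, hzn.2.1, hzn.2.2]) (Set.toFinite _),
        Set.ncard_insert_of_notMem (by simp [hne_bc, Ne.symm hwb]) (Set.toFinite _),
        Set.ncard_pair (Ne.symm hwc)]
    have := Set.ncard_le_ncard hq (Set.toFinite _)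
    rw [hcard, hdeg] at this
    omega
  have hadjw : T.graph.Adj (T.parent b) w := hw
  refine ⟨T.parent b, w, hadjw, ?_⟩
  have hedge : ∀ v : T.V, v = T.leaf b ∨ v = T.leaf c →
      (T.graph.deleteEdges {s(T.parent b, w)}).Adj v (T.parent b) := by
    intro v hv
    rw [SimpleGraph.deleteEdges_adj]
    constructor
    · rcases hv with rfl | rfl
      · exact hlb
      · exact hlc
    · simp only [Set.mem_singleton_iff]
      intro hEq
      rw [Sym2.eq_iff] at hEq
      rcases hv with rfl | rfl <;> rcases hEq with ⟨h1, h2⟩ | ⟨h1, h2⟩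
      · exact hnl ⟨b, h1⟩
      · exact hwb h1.symm
      · exact hnl ⟨c, h1⟩
      · exact hwc h1.symm
  ext x
  simp only [Set.mem_insert_iff, Set.mem_singleton_iff, Set.mem_setOf_eq]
  constructor
  · rintro (rfl | rfl)
    · exact (hedge _ (Or.inl rfl)).reachable
    · exact (hedge _ (Or.inr rfl)).reachable
  · intro hr
    by_contra hx
    push_neg at hx
    obtain ⟨hxb, hxc⟩ := hx
    obtain ⟨q0⟩ := hr.symm
    obtain ⟨q, hq⟩ := q0.toPath
    have hpne : T.parent b ≠ T.leaf x := fun h => hnl (h ▸ ⟨x, rfl⟩)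
    obtain ⟨z, h₁, q₁, rfl⟩ := q.exists_eq_cons_of_ne hpne
    rw [SimpleGraph.deleteEdges_adj] at h₁
    obtain ⟨h₁a, h₁e⟩ := h₁
    have hzw : z ≠ w := by
      rintro rfl
      exact h₁e (Set.mem_singleton _)
    have hz2 : z = T.leaf b ∨ z = T.leaf c := by
      have := hsub h₁a
      simp only [Set.mem_insert_iff, Set.mem_singleton_iff] at this
      rcases this with h | h | h
      · exact Or.inl h
      · exact Or.inr h
      · exact absurd h hzw
    have key : ∀ y : X, T.parent y = T.parent b → z = T.leaf y → False := by
      intro y hyp hzy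
      subst hzy
      have hyne : T.leaf y ≠ T.leaf x := by
        intro h
        have : y = x := T.leaf_inj h
        subst this
        rcases hz2 with h | h
        · exact hxb (T.leaf_inj h)
        · exact hxc (T.leaf_inj h)
      obtain ⟨z₂, h₂, q₂, rfl⟩ := q₁.exists_eq_cons_of_ne hyne
      rw [SimpleGraph.deleteEdges_adj] at h₂
      have hz₂ : z₂ ∈ T.graph.neighborSet (T.leaf y) := h₂.1
      rw [leaf_nbr, Set.mem_singleton_iff] at hz₂
      subst hz₂
      have hmem := (q₂.copy hyp rfl).start_mem_support
      rw [SimpleGraph.Walk.support_copy] at hmem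
      have hnd := hq.support_nodup
      rw [SimpleGraph.Walk.support_cons, SimpleGraph.Walk.support_cons,
        List.nodup_cons] at hnd
      exact hnd.1 (by
        simp only [List.mem_cons]
        exact Or.inr hmem)
    rcases hz2 with h | h
    · exact key b rfl h
    · exact key c hpp.symm h

lemma restrict_pair (T T' : PhyloTree X) (b c : X) :
    restrictEqOn T T' {b, c} := by
  intro a ha b' hb' c' hc' d' _ hinj
  exfalso
  simp only [Set.mem_insert_iff, Set.mem_singleton_iff] at ha hb' hc'
  have h01 : a ≠ b' := by
    intro h
    have : (0 : Fin 4) = 1 := hinj (by simp [h])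
    exact absurd this (by decide)
  have h02 : a ≠ c' := by
    intro h
    have : (0 : Fin 4) = 2 := hinj (by simp [h, Matrix.cons_val_zero])
    exact absurd this (by decide)
  have h12 : b' ≠ c' := by
    intro h
    have : (1 : Fin 4) = 2 := hinj (by simp [h])
    exact absurd this (by decide)
  rcases ha with rfl | rfl <;> rcases hb' with rfl | rfl <;> rcases hc' with rfl | rfl <;>
    simp_all

lemma fp_eq (T : PhyloTree X) (a b c : X) (h : T.frontPendant [a, b, c]) :
    T.parent a = T.parent b := by
  obtain ⟨x, y, hx, hy, hxy⟩ := h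
  simp at hx hy
  obtain rfl : a = x := by simpa using hx
  obtain rfl : b = y := by simpa using hy
  exact hxy

end AuxPendancy

/-- Observation `obs:pendancy`: if Reductions 1–7 do not
apply and `(b,c,d)` is a common 3-chain pendant in `T'`, then it is not pendant
in `T`. -/
theorem pendant_in_one_only {X : Type} (T T' : PhyloTree X)
    (hirr : Irred7 T T') (b c d : X)
    (hc : commonChain T T' [b, c, d])
    (hp : T'.pendantChain [b, c, d]) :
    ¬ T.pendantChain [b, c, d] := by
  intro hpc
  have hnd : ([b, c, d] : List X).Nodup := hc.1.2.1
  simp only [List.nodup_cons, List.mem_cons, List.mem_singleton, not_or,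
    List.nodup_nil, and_true, List.not_mem_nil] at hnd
  have hbc : b ≠ c := by tauto
  have hcd : c ≠ d := by tauto
  obtain ⟨_, hP'⟩ := hp
  obtain ⟨_, hPT⟩ := hpc
  have hrev : ([b, c, d] : List X).reverse = [d, c, b] := by simp
  rw [hrev] at hP' hPT
  rcases hPT with hTf | hTb <;> rcases hP' with hT'f | hT'b
  · -- both front: common cherry {b,c}, Reduction 1
    exact hirr.1 ⟨{b, c}, by rw [Set.ncard_pair hbc],
      cherry_pendantSet T ⟨hbc, fp_eq T b c d hTf⟩,
      cherry_pendantSet T' ⟨hbc, fp_eq T' b c d hT'f⟩,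
      restrict_pair T T' b c⟩
  · -- T front, T' back: Reduction 3 on (T, T')
    exact hirr.2.2.1 ⟨b, c, d, hc, ⟨hbc, fp_eq T b c d hTf⟩,
      ⟨hcd, (fp_eq T' d c b hT'b).symm⟩⟩
  · -- T back, T' front: Reduction 3 on (T', T)
    exact hirr.2.2.2.1 ⟨b, c, d, ⟨hc.2, hc.1⟩, ⟨hbc, fp_eq T' b c d hT'f⟩,
      ⟨hcd, (fp_eq T d c b hTb).symm⟩⟩
  · -- both back: common cherry {c,d}, Reduction 1
    exact hirr.1 ⟨{c, d}, by rw [Set.ncard_pair hcd],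
      cherry_pendantSet T ⟨hcd, (fp_eq T d c b hTb).symm⟩,
      cherry_pendantSet T' ⟨hcd, (fp_eq T' d c b hT'b).symm⟩,
      restrict_pair T T' c d⟩
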